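/- arXiv:2512.08874 — 6 statements merged into one kernel-verified Lean document; each statement's English description precedes it below -/
import Mathlib

section
/- Let q be a prime power, ℓ > 1, n = (q^ℓ - 1)/(q - 1), and M ≥ 1. Let a_0, ..., a_M ∈ 𝔽_q and let F = Σ_{i=0}^{M} a_i X_i^n in the multivariate polynomial ring 𝔽_q[X_0, ..., X_M]. Then Σ_{i=0}^{M} (∂F/∂X_i) · X_i^{q^ℓ} = n · F^q as polynomials. In particular, F divides Σ_{i=0}^{M} (∂F/∂X_i) · X_i^{q^ℓ}, i.e., the Fermat hypersurface F = 0 is 𝔽_{q^ℓ}-Frobenius nonclassical. -/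
open MvPolynomial

/-!
Differentiating the diagonal form `F = ∑ aᵢ Xᵢⁿ` gives `∑ (∂F/∂Xᵢ) Xᵢ^(q^ℓ) = n ∑ aᵢ Xᵢ^(n - 1 + q^ℓ)`.
Since `n (q - 1) = q^ℓ - 1`, the exponent `n - 1 + q^ℓ` equals `n q`, and over `𝔽_q` the Frobenius
`f ↦ f^q` fixes the coefficients `aᵢ`, so `∑ aᵢ Xᵢ^(n q) = F^q`.
-/

theorem Nat.sub_one_add_pow_eq_mul_of_eq_div {q ℓ n : ℕ} (hq : 1 ≤ q)
    (hn : n = (q ^ ℓ - 1) / (q - 1)) (hn0 : n ≠ 0) : n - 1 + q ^ ℓ = n * q := by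
  have hdvd : q - 1 ∣ q ^ ℓ - 1 := by simpa using Nat.sub_dvd_pow_sub_pow q 1 ℓ
  have hmul : n * (q - 1) = q ^ ℓ - 1 := hn ▸ Nat.div_mul_cancel hdvd
  have hsplit : n * q = n * (q - 1) + n := by
    conv_lhs => rw [← Nat.sub_add_cancel hq]
    rw [mul_add, mul_one]
  have hpow : 1 ≤ q ^ ℓ := Nat.one_le_pow ℓ q hq
  rw [hsplit, hmul]
  omega

namespace MvPolynomial

theorem expand_card {K σ : Type*} [Field K] [Fintype K] (f : MvPolynomial σ K) :
    expand (Fintype.card K) f = f ^ Fintype.card K := by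
  obtain ⟨k, hp, hcard⟩ := FiniteField.card K (ringChar K)
  have : Fact (ringChar K).Prime := ⟨hp⟩
  have hfrob : (expand (Fintype.card K)).toRingHom =
      iterateFrobenius (MvPolynomial σ K) (ringChar K) k := by
    refine ringHom_ext (fun r => ?_) (fun i => ?_)
    · simp [iterateFrobenius_def, ← hcard, ← C_pow, FiniteField.pow_card]
    · simp [iterateFrobenius_def, ← hcard]
  simpa [iterateFrobenius_def, ← hcard] using congr($hfrob f)

variable {R σ : Type*} [CommSemiring R] [Fintype σ]

theorem pderiv_sum_C_mul_X_pow (a : σ → R) (n : ℕ) (i : σ) :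
    pderiv i (∑ j, C (a j) * X j ^ n) = (n : MvPolynomial σ R) * (C (a i) * X i ^ (n - 1)) := by
  rw [map_sum, Finset.sum_eq_single i]
  · simp [mul_left_comm]
  · intro j _ hj
    simp [pderiv_X_of_ne hj]
  · simp

theorem sum_pderiv_sum_C_mul_X_pow_mul_X_pow (a : σ → R) (n m : ℕ) :
    ∑ i, pderiv i (∑ j, C (a j) * X j ^ n) * X i ^ m =
      (n : MvPolynomial σ R) * ∑ i, C (a i) * X i ^ (n - 1 + m) := by
  simp only [pderiv_sum_C_mul_X_pow, Finset.mul_sum, pow_add, mul_assoc]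

end MvPolynomial

theorem stmt_0_general (q : ℕ)
    (K : Type*) [Field K] [Fintype K] (hK : Fintype.card K = q)
    (ℓ : ℕ) (n : ℕ) (hn : n = (q ^ ℓ - 1) / (q - 1))
    (M : ℕ) (a : Fin (M + 1) → K)
    (F : MvPolynomial (Fin (M + 1)) K)
    (hF : F = ∑ i, C (a i) * X i ^ n) :
    (∑ i, (pderiv i F) * X i ^ (q ^ ℓ)) = (n : MvPolynomial (Fin (M + 1)) K) * F ^ q ∧
    F ∣ ∑ i, (pderiv i F) * X i ^ (q ^ ℓ) := by
  have hq : 1 < q := hK ▸ Fintype.one_lt_card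
  have hFq : F ^ q = ∑ i, C (a i) * X i ^ (n * q) := by
    rw [hF, ← hK, ← expand_card, map_sum]
    simp only [map_mul, map_pow, expand_C, expand_X, ← pow_mul']
  have key : ∑ i, pderiv i F * X i ^ q ^ ℓ = n * F ^ q := by
    rw [hF, sum_pderiv_sum_C_mul_X_pow_mul_X_pow, ← hF, hFq]
    rcases eq_or_ne n 0 with rfl | hn0
    · simp
    · rw [Nat.sub_one_add_pow_eq_mul_of_eq_div hq.le hn hn0]
  exact ⟨key, key ▸ (dvd_pow_self F (by omega)).mul_left _⟩

theorem stmt_0 (q : ℕ) (hq : IsPrimePow q)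
    (K : Type*) [Field K] [Fintype K] (hK : Fintype.card K = q)
    (ℓ : ℕ) (hℓ : 1 < ℓ) (n : ℕ) (hn : n = (q ^ ℓ - 1) / (q - 1))
    (M : ℕ) (hM : 1 ≤ M) (a : Fin (M + 1) → K)
    (F : MvPolynomial (Fin (M + 1)) K)
    (hF : F = ∑ i, C (a i) * X i ^ n) :
    (∑ i, (pderiv i F) * X i ^ (q ^ ℓ)) = (n : MvPolynomial (Fin (M + 1)) K) * F ^ q ∧
    F ∣ ∑ i, (pderiv i F) * X i ^ (q ^ ℓ) :=
  stmt_0_general q K hK ℓ n hn M a F hF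
end

section
/- Let p be a prime, q a power of p, and n ≥ 2. Let G ∈ 𝔽_q[X_0, ..., X_{n-1}] be a homogeneous polynomial of degree d with d ≡ 1 (mod p), viewed inside 𝔽_q[X_0, ..., X_n], and set F = G - X_n^d. Suppose there is a positive integer k with k·d = d - 1 + q and G^k = Σ_{i=0}^{n-1} (∂G/∂X_i)·X_i^q. Then F divides Σ_{i=0}^{n} (∂F/∂X_i)·X_i^q in 𝔽_q[X_0, ..., X_n]. -/
/-! Only the last variable is special: differentiating `F = G - X_n ^ d` reproduces the Euler-type
sum of `G` and adds `-d X_n ^ (d - 1 + q)`. Since `d ≡ 1 (mod p)` and `d - 1 + q = k d`, the sum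
becomes `G ^ k - (X_n ^ d) ^ k`, which `G - X_n ^ d` divides. -/

open MvPolynomial

namespace MvPolynomial

variable {R : Type*} [CommRing R]

theorem pderiv_rename_eq_zero_of_notMem_range {σ τ : Type*} {f : σ → τ} {i : τ}
    (hi : i ∉ Set.range f) (P : MvPolynomial σ R) : pderiv i (rename f P) = 0 := by
  refine pderiv_eq_zero_of_notMem_vars fun h => ?_
  obtain ⟨j, -, rfl⟩ := mem_vars_rename f P h
  exact hi ⟨j, rfl⟩

theorem pderiv_last_rename_castSucc {n : ℕ} (P : MvPolynomial (Fin n) R) :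
    pderiv (Fin.last n) (rename Fin.castSucc P) = 0 :=
  pderiv_rename_eq_zero_of_notMem_range (by simp) P

theorem sum_pderiv_sub_X_last_pow_mul_X_pow {n : ℕ} {G : MvPolynomial (Fin (n + 1)) R}
    (hG : pderiv (Fin.last n) G = 0) (d q : ℕ) :
    ∑ i : Fin (n + 1), pderiv i (G - X (Fin.last n) ^ d) * X i ^ q =
      ∑ i : Fin n, pderiv i.castSucc G * X i.castSucc ^ q -
        (d : MvPolynomial (Fin (n + 1)) R) * X (Fin.last n) ^ (d - 1 + q) := by
  have h_castSucc (i : Fin n) :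
      pderiv i.castSucc (G - X (Fin.last n) ^ d) = pderiv i.castSucc G := by
    rw [map_sub, pderiv_pow, pderiv_X_of_ne (Fin.castSucc_ne_last i).symm, mul_zero, sub_zero]
  have h_last : pderiv (Fin.last n) (G - X (Fin.last n) ^ d) =
      -((d : MvPolynomial (Fin (n + 1)) R) * X (Fin.last n) ^ (d - 1)) := by
    rw [map_sub, hG, pderiv_pow, pderiv_X_self, mul_one, zero_sub]
  rw [Fin.sum_univ_castSucc, h_last]
  simp only [h_castSucc]
  ring

end MvPolynomial

theorem stmt_5_general (p : ℕ) (q : ℕ)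
    (K : Type*) [Field K] [CharP K p]
    (n : ℕ) (d : ℕ) (hd : d ≡ 1 [MOD p])
    (G₀ : MvPolynomial (Fin n) K)
    (G : MvPolynomial (Fin (n + 1)) K) (hG : G = rename Fin.castSucc G₀)
    (F : MvPolynomial (Fin (n + 1)) K) (hF : F = G - X (Fin.last n) ^ d)
    (k : ℕ) (hkd : k * d = d - 1 + q)
    (hGk : G ^ k = ∑ i : Fin n, (pderiv i.castSucc G) * X i.castSucc ^ q) :
    F ∣ ∑ i : Fin (n + 1), (pderiv i F) * X i ^ q := by
  have hG_last : pderiv (Fin.last n) G = 0 := hG ▸ pderiv_last_rename_castSucc G₀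
  have hd_one : (d : MvPolynomial (Fin (n + 1)) K) = 1 := by
    simpa using CharP.natCast_eq_natCast' (MvPolynomial (Fin (n + 1)) K) p hd
  rw [hF, sum_pderiv_sub_X_last_pow_mul_X_pow hG_last, ← hGk, hd_one, one_mul, ← hkd,
    mul_comm, pow_mul]
  exact sub_dvd_pow_sub_pow _ _ _

theorem stmt_5 (p : ℕ) (hp : p.Prime) (q : ℕ) (hq : ∃ k, q = p ^ k)
    (K : Type*) [Field K] [Fintype K] [CharP K p] (hK : Fintype.card K = q)
    (n : ℕ) (hn : 2 ≤ n) (d : ℕ) (hd : d ≡ 1 [MOD p])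
    (G₀ : MvPolynomial (Fin n) K) (hhom : G₀.IsHomogeneous d)
    (G : MvPolynomial (Fin (n + 1)) K) (hG : G = rename Fin.castSucc G₀)
    (F : MvPolynomial (Fin (n + 1)) K) (hF : F = G - X (Fin.last n) ^ d)
    (k : ℕ) (hk : 0 < k) (hkd : k * d = d - 1 + q)
    (hGk : G ^ k = ∑ i : Fin n, (pderiv i.castSucc G) * X i.castSucc ^ q) :
    F ∣ ∑ i : Fin (n + 1), (pderiv i F) * X i ^ q :=
  stmt_5_general p q K n d hd G₀ G hG F hF k hkd hGk
end

section
/- Let p be a prime, q a power of p, and n ≥ 2. Let G ∈ 𝔽_q[X_0, ..., X_{n-1}] be homogeneous of degree d > 2 with d ≡ 1 (mod p), and set F = G - X_n^d ∈ 𝔽_q[X_0, ..., X_n]. Assume F is irreducible over an algebraic closure of 𝔽_q. If F divides Σ_{i=0}^{n} (∂F/∂X_i)·X_i^q, then there exists a positive integer k such that k·d = d - 1 + q, p divides k, and G^k = Σ_{i=0}^{n-1} (∂G/∂X_i)·X_i^q as polynomials. -/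
/-!
Put `e = d - 1 + q`. Since `d ≡ 1 (mod p)`, the last term of the sum is `-X_n^e`, so the sum is
`A - X_n^e` with `A = Σ_{i<n} ∂G/∂X_i · X_i^q`. Regard everything as a polynomial in `X_n` over
`K[X_0, …, X_{n-1}]`. Writing `e = d s + r` with `r < d`, modulo `G - X_n^d` we have
`X_n^e ≡ G^s X_n^r`, so `G - X_n^d` divides `A - G^s X_n^r`, which has degree `< d` in `X_n` and
therefore vanishes. As `G ≠ 0` (otherwise `F = -X_n^d` is reducible), this forces `r = 0` and
`A = G^s`; finally `p ∣ s d` with `d` prime to `p`.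
-/

open MvPolynomial

lemma not_irreducible_neg_pow {R : Type*} [Ring R] (x : R) {n : ℕ} (hn : n ≠ 1) :
    ¬ Irreducible (-x ^ n) := by
  rw [neg_eq_neg_one_mul, irreducible_isUnit_mul isUnit_one.neg]
  exact not_irreducible_pow hn

lemma Nat.dvd_of_mul_eq_sub_one_add {p q d k : ℕ} (hdp : d ≡ 1 [MOD p]) (hpq : p ∣ q)
    (h : k * d = d - 1 + q) : p ∣ k := by
  have hcop : p.Coprime d := by
    rw [Nat.coprime_comm, Nat.Coprime, hdp.gcd_eq, Nat.gcd_one_left]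
  refine hcop.dvd_of_dvd_mul_right ?_
  rw [h]
  exact dvd_add (Nat.dvd_of_mod_eq_zero (Nat.sub_mod_eq_zero_of_mod_eq hdp)) hpq

namespace Polynomial

variable {R : Type*} [CommRing R]

lemma C_sub_X_pow_dvd_C_pow_mul_X_pow_sub_X_pow (b : R) (d s r : ℕ) :
    C b - X ^ d ∣ C (b ^ s) * X ^ r - X ^ (d * s + r) := by
  have h : C (b ^ s) * X ^ r - X ^ (d * s + r) = (C b ^ s - (X ^ d) ^ s) * X ^ r := by
    rw [map_pow, pow_add, pow_mul]; ring
  rw [h]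
  exact (sub_dvd_pow_sub_pow _ _ s).mul_right _

lemma exists_mul_eq_and_eq_pow_of_C_sub_X_pow_dvd [IsDomain R] {a b : R} {d e : ℕ}
    (hd : 0 < d) (hb : b ≠ 0) (h : C b - X ^ d ∣ C a - X ^ e) :
    ∃ k, k * d = e ∧ a = b ^ k := by
  obtain ⟨s, r, hrd, rfl⟩ : ∃ s r, r < d ∧ e = d * s + r :=
    ⟨e / d, e % d, Nat.mod_lt e hd, (Nat.div_add_mod e d).symm⟩
  have hrem : C b - X ^ d ∣ C a - C (b ^ s) * X ^ r := by
    simpa only [sub_sub_sub_cancel_right] using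
      dvd_sub h (C_sub_X_pow_dvd_C_pow_mul_X_pow_sub_X_pow b d s r)
  have hzero : C a - C (b ^ s) * X ^ r = 0 := by
    refine eq_zero_of_dvd_of_natDegree_lt hrem ?_
    calc natDegree (C a - C (b ^ s) * X ^ r)
        ≤ max (natDegree (C a)) (natDegree (C (b ^ s) * X ^ r)) := natDegree_sub_le _ _
      _ ≤ r := max_le (by rw [natDegree_C]; omega) (natDegree_C_mul_X_pow_le _ _)
      _ < d := hrd
      _ = natDegree (C b - X ^ d) := by rw [← neg_sub, natDegree_neg, natDegree_X_pow_sub_C]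
  obtain rfl : r = 0 := by
    by_contra hr
    have hcoeff := congrArg (coeff · r) hzero
    simp only [coeff_sub, coeff_C, coeff_C_mul_X_pow, if_neg hr, if_true, zero_sub, coeff_zero,
      neg_eq_zero] at hcoeff
    exact pow_ne_zero s hb hcoeff
  exact ⟨s, mul_comm s d, C_injective (by simpa [sub_eq_zero] using hzero)⟩

end Polynomial

namespace MvPolynomial

section toPolynomialLast

variable {R : Type*} [CommSemiring R] {n : ℕ}

noncomputable def toPolynomialLast :
    MvPolynomial (Fin (n + 1)) R →ₐ[R] Polynomial (MvPolynomial (Fin n) R) :=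
  aeval (Fin.lastCases Polynomial.X fun i => Polynomial.C (X i))

lemma toPolynomialLast_rename_castSucc (B : MvPolynomial (Fin n) R) :
    toPolynomialLast (rename Fin.castSucc B) = Polynomial.C B := by
  rw [toPolynomialLast, aeval_rename]
  induction B using MvPolynomial.induction_on with
  | C a => simp
  | add p q hp hq => simp [hp, hq]
  | mul_X p i ih => simp [ih]

lemma toPolynomialLast_X_last :
    toPolynomialLast (X (Fin.last n) : MvPolynomial (Fin (n + 1)) R) = Polynomial.X := by
  simp [toPolynomialLast]

end toPolynomialLast

lemma sum_pderiv_rename_mul_X_pow {R σ τ : Type*} [CommSemiring R] [Fintype σ] {f : σ → τ}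
    (hf : Function.Injective f) (P : MvPolynomial σ R) (q : ℕ) :
    ∑ i, pderiv (f i) (rename f P) * X (f i) ^ q = rename f (∑ i, pderiv i P * X i ^ q) := by
  simp [pderiv_rename hf]

lemma sum_pderiv_rename_castSucc_sub_X_last_pow_mul_X_pow {R : Type*} [CommRing R] {n d : ℕ}
    (hd : (d : R) = 1) (P : MvPolynomial (Fin n) R) (q : ℕ) :
    ∑ i, pderiv i (rename Fin.castSucc P - X (Fin.last n) ^ d) * X i ^ q =
      ∑ i : Fin n, pderiv i.castSucc (rename Fin.castSucc P) * X i.castSucc ^ q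
        - X (Fin.last n) ^ (d - 1 + q) := by
  have hlast : pderiv (Fin.last n) (rename Fin.castSucc P) = 0 := by
    refine pderiv_eq_zero_of_notMem_vars fun h => ?_
    obtain ⟨i, -, hi⟩ := Finset.mem_image.mp (vars_rename _ _ h)
    exact (Fin.castSucc_lt_last i).ne hi
  have hdX : (d : MvPolynomial (Fin (n + 1)) R) = 1 := by rw [← map_natCast C, hd, map_one]
  have hcast (i : Fin n) : pderiv i.castSucc (rename Fin.castSucc P - X (Fin.last n) ^ d) =
      pderiv i.castSucc (rename Fin.castSucc P) := by
    rw [map_sub, pderiv_pow, pderiv_X_of_ne (Fin.castSucc_lt_last i).ne', mul_zero, sub_zero]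
  rw [Fin.sum_univ_castSucc, Finset.sum_congr rfl fun i _ => by rw [hcast i], map_sub, hlast,
    pderiv_pow, pderiv_X_self, hdX, zero_sub, one_mul, mul_one, neg_mul, ← pow_add,
    sub_eq_add_neg]

end MvPolynomial

theorem stmt_6_general (p : ℕ) (q : ℕ)
    (K : Type*) [Field K] [Fintype K] [CharP K p] (hK : Fintype.card K = q)
    (n : ℕ) (d : ℕ) (hd : 2 < d) (hdp : d ≡ 1 [MOD p])
    (G₀ : MvPolynomial (Fin n) K)
    (G : MvPolynomial (Fin (n + 1)) K) (hG : G = rename Fin.castSucc G₀)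
    (F : MvPolynomial (Fin (n + 1)) K) (hF : F = G - X (Fin.last n) ^ d)
    (hirr : Irreducible (MvPolynomial.map (algebraMap K (AlgebraicClosure K)) F))
    (hdvd : F ∣ ∑ i : Fin (n + 1), (pderiv i F) * X i ^ q) :
    ∃ k : ℕ, 0 < k ∧ k * d = d - 1 + q ∧ p ∣ k ∧
      G ^ k = ∑ i : Fin n, (pderiv i.castSucc G) * X i.castSucc ^ q := by
  subst hG hF
  have hpq : p ∣ q := (CharP.cast_eq_zero_iff K p q).mp (hK ▸ FiniteField.cast_card_eq_zero K)
  have hG₀ : G₀ ≠ 0 := by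
    rintro rfl
    rw [map_zero, zero_sub, map_neg, map_pow, map_X] at hirr
    exact not_irreducible_neg_pow _ (by omega) hirr
  have hd1 : (d : K) = 1 := (CharP.natCast_eq_natCast' K p hdp).trans Nat.cast_one
  rw [sum_pderiv_rename_castSucc_sub_X_last_pow_mul_X_pow hd1,
    sum_pderiv_rename_mul_X_pow (Fin.castSucc_injective n)] at hdvd
  rw [sum_pderiv_rename_mul_X_pow (Fin.castSucc_injective n)]
  have hdvdX := map_dvd toPolynomialLast hdvd
  simp only [map_sub, map_pow, toPolynomialLast_rename_castSucc, toPolynomialLast_X_last] at hdvdX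
  obtain ⟨k, hkd, hk⟩ :=
    Polynomial.exists_mul_eq_and_eq_pow_of_C_sub_X_pow_dvd (by omega) hG₀ hdvdX
  refine ⟨k, Nat.pos_of_ne_zero ?_, hkd, Nat.dvd_of_mul_eq_sub_one_add hdp hpq hkd,
    by rw [← map_pow, hk]⟩
  rintro rfl
  omega

theorem stmt_6 (p : ℕ) (hp : p.Prime) (q : ℕ) (hq : ∃ k, q = p ^ k)
    (K : Type*) [Field K] [Fintype K] [CharP K p] (hK : Fintype.card K = q)
    (n : ℕ) (hn : 2 ≤ n) (d : ℕ) (hd : 2 < d) (hdp : d ≡ 1 [MOD p])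
    (G₀ : MvPolynomial (Fin n) K) (hhom : G₀.IsHomogeneous d)
    (G : MvPolynomial (Fin (n + 1)) K) (hG : G = rename Fin.castSucc G₀)
    (F : MvPolynomial (Fin (n + 1)) K) (hF : F = G - X (Fin.last n) ^ d)
    (hirr : Irreducible (MvPolynomial.map (algebraMap K (AlgebraicClosure K)) F))
    (hdvd : F ∣ ∑ i : Fin (n + 1), (pderiv i F) * X i ^ q) :
    ∃ k : ℕ, 0 < k ∧ k * d = d - 1 + q ∧ p ∣ k ∧
      G ^ k = ∑ i : Fin n, (pderiv i.castSucc G) * X i.castSucc ^ q :=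
  stmt_6_general p q K hK n d hd hdp G₀ G hG F hF hirr hdvd
end

section
/- Let K be a field, let X = (X_1, ..., X_m) and Y = (Y_1, ..., Y_s) be disjoint sets of variables, let G, A ∈ K[X] and H, B ∈ K[Y] with G nonconstant and H nonconstant. If G - H divides A - B in K[X, Y], then there exists a univariate polynomial R ∈ K[T] such that A = R(G) and B = R(H). -/
open Polynomial in
lemma expand_aux {L : Type*} [Field L] (g : Polynomial L) (hg : 0 < g.natDegree) (N : ℕ) :
    ∀ a : Polynomial L, a.natDegree ≤ N → ∃ n, ∃ c : ℕ → Polynomial L,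
      (∀ i, (c i).degree < g.degree) ∧ a = ∑ i ∈ Finset.range n, c i * g ^ i := by
  have hg0 : g ≠ 0 := fun h => by simp [h] at hg
  have hgdeg : (0 : WithBot ℕ) < g.degree := by
    rw [Polynomial.degree_eq_natDegree hg0]; exact_mod_cast hg
  have base : ∀ a : Polynomial L, a.degree < g.degree → ∃ n, ∃ c : ℕ → Polynomial L,
      (∀ i, (c i).degree < g.degree) ∧ a = ∑ i ∈ Finset.range n, c i * g ^ i := by
    intro a hlt
    refine ⟨1, fun i => if i = 0 then a else 0, fun i => ?_, by simp⟩
    by_cases hi : i = 0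
    · simpa [hi] using hlt
    · simpa [hi] using lt_of_le_of_lt bot_le hgdeg
  induction N with
  | zero =>
    intro a ha
    refine base a (lt_of_le_of_lt ?_ hgdeg)
    calc a.degree ≤ (a.natDegree : WithBot ℕ) := Polynomial.degree_le_natDegree
      _ ≤ ((0 : ℕ) : WithBot ℕ) := by exact_mod_cast ha
      _ = 0 := rfl
  | succ N ih =>
    intro a ha
    by_cases hlt : a.degree < g.degree
    · exact base a hlt
    · push_neg at hlt
      set u := g.leadingCoeff with hu
      have hu0 : u ≠ 0 := Polynomial.leadingCoeff_ne_zero.2 hg0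
      have hmonic : (g * Polynomial.C u⁻¹).Monic := Polynomial.monic_mul_leadingCoeff_inv hg0
      set g' := g * Polynomial.C u⁻¹ with hg'
      have hdegg' : g'.natDegree = g.natDegree := by
        rw [hg', Polynomial.natDegree_mul hg0 (by simp [hu0]), Polynomial.natDegree_C, add_zero]
      set q := a /ₘ g' with hq
      have hqdeg : q.natDegree ≤ N := by
        rw [hq, Polynomial.natDegree_divByMonic a hmonic, hdegg']
        omega
      obtain ⟨n, c, hc, hsum⟩ := ih q hqdeg
      refine ⟨n + 1, fun i => Nat.rec (a %ₘ g') (fun j _ => Polynomial.C u⁻¹ * c j) i, fun i => ?_, ?_⟩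
      · cases i with
        | zero => exact Polynomial.degree_modByMonic_lt a hmonic |>.trans_eq (by
            rw [hg', Polynomial.degree_mul, Polynomial.degree_C (by simp [hu0]), add_zero])
        | succ j =>
          calc (Polynomial.C u⁻¹ * c j).degree ≤ (Polynomial.C u⁻¹).degree + (c j).degree :=
              Polynomial.degree_mul_le _ _
            _ ≤ 0 + (c j).degree := add_le_add Polynomial.degree_C_le le_rfl
            _ = (c j).degree := by rw [zero_add]
            _ < g.degree := hc j
      · have key : a = a %ₘ g' + g * (Polynomial.C u⁻¹ * q) := by
          rw [← mul_assoc, ← hg', Polynomial.modByMonic_add_div a g']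
        conv_lhs => rw [key]
        rw [Finset.sum_range_succ', hsum, Finset.mul_sum, Finset.mul_sum, add_comm]
        simp only [pow_succ]
        refine congrArg₂ (· + ·) ?_ ?_
        refine Finset.sum_congr rfl fun i _ => by ring
        simp

open Polynomial in
lemma uni_core {L : Type*} [Field L] (g h a b : Polynomial L)
    (hg : 0 < g.natDegree) (hh : 0 < h.natDegree)
    (hdvd : (Polynomial.map Polynomial.C g - Polynomial.C h :
        Polynomial (Polynomial L)) ∣ Polynomial.map Polynomial.C a - Polynomial.C b) :
    ∃ R : Polynomial L, Polynomial.aeval g R = a ∧ Polynomial.aeval h R = b := by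
  classical
  have hg0 : g ≠ 0 := fun h' => by simp [h'] at hg
  have hgdeg : (0 : WithBot ℕ) < g.degree := by
    rw [Polynomial.degree_eq_natDegree hg0]; exact_mod_cast hg
  obtain ⟨n, c, hc, hsum⟩ := expand_aux g hg a.natDegree a le_rfl
  set Gm : Polynomial (Polynomial L) := Polynomial.map Polynomial.C g with hGm
  set Hm : Polynomial (Polynomial L) := Polynomial.C h with hHm
  -- degree facts
  have hdegGm : Gm.degree = g.degree :=
    Polynomial.degree_map_eq_of_injective Polynomial.C_injective g
  have hdegGH : (Gm - Hm).degree = g.degree := by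
    rw [Polynomial.degree_sub_eq_left_of_degree_lt, hdegGm]
    rw [hdegGm]
    exact lt_of_le_of_lt Polynomial.degree_C_le hgdeg
  -- a.map C as sum
  have h1 : Polynomial.map Polynomial.C a = ∑ i ∈ Finset.range n,
      Polynomial.map Polynomial.C (c i) * Gm ^ i := by
    conv_lhs => rw [hsum]
    rw [Polynomial.map_sum]
    exact Finset.sum_congr rfl fun i _ => by rw [Polynomial.map_mul, Polynomial.map_pow]
  have hdvd2 : Gm - Hm ∣ (∑ i ∈ Finset.range n,
      Polynomial.map Polynomial.C (c i) * Hm ^ i) - Polynomial.C b := by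
    have d1 : Gm - Hm ∣ Polynomial.map Polynomial.C a - ∑ i ∈ Finset.range n,
        Polynomial.map Polynomial.C (c i) * Hm ^ i := by
      rw [h1, ← Finset.sum_sub_distrib]
      refine Finset.dvd_sum fun i _ => ?_
      rw [← mul_sub]
      exact Dvd.dvd.mul_left (sub_dvd_pow_sub_pow Gm Hm i) _
    have d2 := dvd_sub hdvd d1
    have e : (Polynomial.map Polynomial.C a - Polynomial.C b)
        - (Polynomial.map Polynomial.C a - ∑ i ∈ Finset.range n,
          Polynomial.map Polynomial.C (c i) * Hm ^ i)
        = (∑ i ∈ Finset.range n, Polynomial.map Polynomial.C (c i) * Hm ^ i)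
          - Polynomial.C b := by ring
    rwa [e] at d2
  have hW : (∑ i ∈ Finset.range n,
      Polynomial.map Polynomial.C (c i) * Hm ^ i) - Polynomial.C b = 0 := by
    refine Polynomial.eq_zero_of_dvd_of_degree_lt hdvd2 ?_
    rw [hdegGH]
    refine lt_of_le_of_lt (Polynomial.degree_sub_le _ _) (max_lt ?_ ?_)
    · refine lt_of_le_of_lt (Polynomial.degree_sum_le _ _) ?_
      rw [Finset.sup_lt_iff (lt_of_le_of_lt bot_le hgdeg)]
      intro i _
      calc (Polynomial.map Polynomial.C (c i) * Hm ^ i).degree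
          ≤ (Polynomial.map Polynomial.C (c i)).degree + (Hm ^ i).degree :=
            Polynomial.degree_mul_le _ _
        _ ≤ (c i).degree + 0 := by
            refine add_le_add ?_ ?_
            · rw [Polynomial.degree_map_eq_of_injective Polynomial.C_injective]
            · rw [hHm, ← Polynomial.C_pow]; exact Polynomial.degree_C_le
        _ = (c i).degree := add_zero _
        _ < g.degree := hc i
    · exact lt_of_le_of_lt Polynomial.degree_C_le hgdeg
  have hEq : Polynomial.C b = ∑ i ∈ Finset.range n,
      Polynomial.map Polynomial.C (c i) * Hm ^ i := (sub_eq_zero.mp hW).symm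
  -- coefficient extraction
  have hcoeff : ∀ k : ℕ, (if k = 0 then b else 0)
      = ∑ i ∈ Finset.range n, Polynomial.C ((c i).coeff k) * h ^ i := by
    intro k
    have := congrArg (fun P : Polynomial (Polynomial L) => P.coeff k) hEq
    simp only [Polynomial.coeff_C] at this
    rw [this, Polynomial.finset_sum_coeff]
    refine Finset.sum_congr rfl fun i _ => ?_
    rw [hHm, ← Polynomial.C_pow, Polynomial.coeff_mul_C, Polynomial.coeff_map]
  -- injectivity of aeval h
  have hinj : ∀ p : Polynomial L, Polynomial.aeval h p = 0 → p = 0 := by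
    intro p hp
    have hcomp : p.comp h = 0 := by
      rwa [Polynomial.comp, ← Polynomial.algebraMap_eq, ← Polynomial.aeval_def]
    rcases Polynomial.comp_eq_zero_iff.mp hcomp with h1 | ⟨_, h2⟩
    · exact h1
    · exfalso
      have := congrArg Polynomial.natDegree h2
      rw [Polynomial.natDegree_C] at this
      omega
  -- evaluation of the Q polynomials
  have haevalQ : ∀ (x : Polynomial L) (r : ℕ → L),
      Polynomial.aeval x (∑ i ∈ Finset.range n, Polynomial.C (r i) * Polynomial.X ^ i)
        = ∑ i ∈ Finset.range n, Polynomial.C (r i) * x ^ i := by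
    intro x r
    rw [map_sum]
    refine Finset.sum_congr rfl fun i _ => ?_
    rw [map_mul, map_pow, Polynomial.aeval_X, Polynomial.aeval_C, Polynomial.algebraMap_eq]
  have hQcoeff : ∀ (r : ℕ → L) (j : ℕ), j < n →
      (∑ i ∈ Finset.range n, Polynomial.C (r i) * Polynomial.X ^ i).coeff j = r j := by
    intro r j hj
    rw [Polynomial.finset_sum_coeff]
    simp only [Polynomial.coeff_C_mul, Polynomial.coeff_X_pow]
    rw [Finset.sum_eq_single j]
    · simp
    · intro i _ hij; simp [Ne.symm hij]
    · intro hjn; exact absurd (Finset.mem_range.mpr hj) hjn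
  -- c i are constants for i < n
  have hck : ∀ i, i < n → ∀ k, 1 ≤ k → (c i).coeff k = 0 := by
    intro i hi k hk
    have h0 : Polynomial.aeval h (∑ j ∈ Finset.range n,
        Polynomial.C ((c j).coeff k) * Polynomial.X ^ j) = 0 := by
      rw [haevalQ h (fun j => (c j).coeff k), ← hcoeff k, if_neg (by omega : ¬ k = 0)]
    have hz := hinj _ h0
    have hco := hQcoeff (fun j => (c j).coeff k) i hi
    rw [hz] at hco
    simpa using hco.symm
  have hcC : ∀ i, i < n → c i = Polynomial.C ((c i).coeff 0) := by
    intro i hi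
    ext k
    rcases Nat.eq_zero_or_pos k with rfl | hk
    · simp
    · rw [hck i hi k hk, Polynomial.coeff_C, if_neg (by omega)]
  refine ⟨∑ i ∈ Finset.range n, Polynomial.C ((c i).coeff 0) * Polynomial.X ^ i, ?_, ?_⟩
  · rw [haevalQ g (fun i => (c i).coeff 0)]
    conv_rhs => rw [hsum]
    exact Finset.sum_congr rfl fun i hi => by rw [← hcC i (Finset.mem_range.mp hi)]
  · rw [haevalQ h (fun i => (c i).coeff 0), ← hcoeff 0, if_pos rfl]

open MvPolynomial

open MvPolynomial

noncomputable def sig {K : Type*} [CommSemiring K] {m : ℕ} (α : Fin m → K) :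
    MvPolynomial (Fin m) K →ₐ[K] Polynomial K :=
  MvPolynomial.aeval (fun i => Polynomial.C (α i) * Polynomial.X)

lemma hc_monomial {K : Type*} [CommSemiring K] {m : ℕ} (k : ℕ) (d : Fin m →₀ ℕ) (r : K) :
    homogeneousComponent k (monomial d r : MvPolynomial (Fin m) K)
      = if d.degree = k then monomial d r else 0 := by
  ext d'
  rw [coeff_homogeneousComponent]
  by_cases h2 : d = d'
  · subst h2
    by_cases h1 : d.degree = k <;> simp [h1]
  · split_ifs <;> simp [coeff_monomial, h2]
lemma coeff_sig {K : Type*} [CommSemiring K] {m : ℕ} (α : Fin m → K)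
    (P : MvPolynomial (Fin m) K) (k : ℕ) :
    (sig α P).coeff k = MvPolynomial.eval α (homogeneousComponent k P) := by
  induction P using MvPolynomial.induction_on' with
  | add p q hp hq => simp [map_add, hp, hq, Polynomial.coeff_add]
  | monomial d r =>
    rw [hc_monomial]
    have hprod : (d.prod fun i k => (Polynomial.C (α i) * Polynomial.X) ^ k)
        = Polynomial.C (d.prod fun i k => α i ^ k) * Polynomial.X ^ d.degree := by
      rw [Finsupp.prod]
      simp only [mul_pow, ← Polynomial.C_pow]
      rw [Finset.prod_mul_distrib, ← map_prod, Finset.prod_pow_eq_pow_sum]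
      rfl
    rw [show (sig α) (monomial d r) = _ from MvPolynomial.aeval_monomial _ d r, hprod,
      Polynomial.algebraMap_eq, ← mul_assoc, ← Polynomial.C_mul, Polynomial.coeff_C_mul,
      Polynomial.coeff_X_pow]
    by_cases hd : d.degree = k
    · rw [if_pos hd, if_pos hd.symm, eval_monomial]
      simp [hd]
    · rw [if_neg hd, if_neg (fun h => hd h.symm)]
      simp
noncomputable def Psi {K : Type*} [CommSemiring K] {m s : ℕ}
    (α : Fin m → K) (β : Fin s → K) :
    MvPolynomial (Fin m ⊕ Fin s) K →ₐ[K] Polynomial (Polynomial K) :=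
  MvPolynomial.aeval (Sum.elim (fun i => Polynomial.C (Polynomial.C (α i)) * Polynomial.X)
    (fun j => Polynomial.C (Polynomial.C (β j) * Polynomial.X)))

lemma Psi_inl {K : Type*} [CommSemiring K] {m s : ℕ} (α : Fin m → K) (β : Fin s → K)
    (P : MvPolynomial (Fin m) K) :
    Psi α β (rename Sum.inl P) = (sig α P).map Polynomial.C := by
  have h1 : Psi α β (rename Sum.inl P)
      = MvPolynomial.aeval (fun i => Polynomial.C (Polynomial.C (α i)) * Polynomial.X) P :=
    MvPolynomial.aeval_rename _ _ _
  have h2 : (Polynomial.mapAlgHom (Algebra.ofId K (Polynomial K))).comp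
        (MvPolynomial.aeval (fun i => Polynomial.C (α i) * Polynomial.X) :
          MvPolynomial (Fin m) K →ₐ[K] Polynomial K)
      = MvPolynomial.aeval (fun i => Polynomial.C (Polynomial.C (α i)) * Polynomial.X) := by
    rw [MvPolynomial.comp_aeval]
    congr 1
    funext i
    show Polynomial.map _ _ = _
    rw [Polynomial.map_mul, Polynomial.map_C, Polynomial.map_X]
    rfl
  rw [h1, ← h2]
  rfl

lemma Psi_inr {K : Type*} [CommSemiring K] {m s : ℕ} (α : Fin m → K) (β : Fin s → K)
    (Q : MvPolynomial (Fin s) K) :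
    Psi α β (rename Sum.inr Q) = Polynomial.C (sig β Q) := by
  have h1 : Psi α β (rename Sum.inr Q)
      = MvPolynomial.aeval (fun j => Polynomial.C (Polynomial.C (β j) * Polynomial.X)) Q :=
    MvPolynomial.aeval_rename _ _ _
  have h2 : (((Algebra.ofId (Polynomial K) (Polynomial (Polynomial K))).restrictScalars K).comp
        (MvPolynomial.aeval (fun j => Polynomial.C (β j) * Polynomial.X) :
          MvPolynomial (Fin s) K →ₐ[K] Polynomial K))
      = MvPolynomial.aeval (fun j => Polynomial.C (Polynomial.C (β j) * Polynomial.X)) := by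
    rw [MvPolynomial.comp_aeval]
    rfl
  rw [h1, ← h2]
  rfl
open MvPolynomial

lemma aeval_poly_inj {L : Type*} [Field L] (h : Polynomial L) (hh : 0 < h.natDegree)
    {p q : Polynomial L} (hpq : Polynomial.aeval h p = Polynomial.aeval h q) : p = q := by
  have h0 : Polynomial.aeval h (p - q) = 0 := by rw [map_sub, hpq, sub_self]
  have hcomp : (p - q).comp h = 0 := by
    rwa [Polynomial.comp, ← Polynomial.algebraMap_eq, ← Polynomial.aeval_def]
  rcases Polynomial.comp_eq_zero_iff.mp hcomp with h1 | ⟨_, h2⟩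
  · exact sub_eq_zero.mp h1
  · exfalso
    have := congrArg Polynomial.natDegree h2
    rw [Polynomial.natDegree_C] at this
    omega

lemma hc_top_ne_zero {K : Type*} [CommRing K] {m : ℕ} (P : MvPolynomial (Fin m) K)
    (hP : P ≠ 0) : homogeneousComponent P.totalDegree P ≠ 0 := by
  have hsupp : P.support.Nonempty := by
    rw [Finset.nonempty_iff_ne_empty]
    intro h
    exact hP (MvPolynomial.support_eq_empty.mp h)
  obtain ⟨d, hd, hsup⟩ := Finset.exists_mem_eq_sup P.support hsupp Finsupp.degree
  intro h0
  have : MvPolynomial.coeff d (homogeneousComponent P.totalDegree P) = 0 := by rw [h0]; rfl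
  rw [coeff_homogeneousComponent, if_pos (by exact hsup.symm)] at this
  exact (MvPolynomial.mem_support_iff.mp hd) this

lemma vanish {K : Type*} [Field K] [Infinite K] {m : ℕ} (W P : MvPolynomial (Fin m) K)
    (hW : W ≠ 0) (h : ∀ α, MvPolynomial.eval α W ≠ 0 → sig α P = 0) : P = 0 := by
  have hk : ∀ k, homogeneousComponent k P = 0 := by
    intro k
    have hmul : W * homogeneousComponent k P = 0 := by
      apply MvPolynomial.funext
      intro x
      rw [map_mul, map_zero]
      by_cases hx : MvPolynomial.eval x W = 0
      · rw [hx, zero_mul]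
      · have hs := h x hx
        have hc := coeff_sig x P k
        rw [hs, Polynomial.coeff_zero] at hc
        rw [← hc, mul_zero]
    rcases mul_eq_zero.mp hmul with h1 | h1
    · exact absurd h1 hW
    · exact h1
  calc P = ∑ i ∈ Finset.range (P.totalDegree + 1), homogeneousComponent i P :=
        (sum_homogeneousComponent P).symm
    _ = 0 := by simp [hk]

lemma main_infinite (K : Type*) [Field K] [Infinite K] (m s : ℕ)
    (G A : MvPolynomial (Fin m) K) (H B : MvPolynomial (Fin s) K)
    (hG : 0 < G.totalDegree) (hH : 0 < H.totalDegree)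
    (hdvd : (rename Sum.inl G - rename Sum.inr H : MvPolynomial (Fin m ⊕ Fin s) K) ∣
      rename Sum.inl A - rename Sum.inr B) :
    ∃ R : Polynomial K, Polynomial.aeval G R = A ∧ Polynomial.aeval H R = B := by
  classical
  set Gd := homogeneousComponent G.totalDegree G with hGdd
  set Hd := homogeneousComponent H.totalDegree H with hHdd
  have hG0 : G ≠ 0 := fun h => by simp [h] at hG
  have hH0 : H ≠ 0 := fun h => by simp [h] at hH
  have hGd : Gd ≠ 0 := hc_top_ne_zero G hG0
  have hHd : Hd ≠ 0 := hc_top_ne_zero H hH0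
  have hex : ∀ {k : ℕ} (W : MvPolynomial (Fin k) K), W ≠ 0 → ∃ α, MvPolynomial.eval α W ≠ 0 := by
    intro k W hW
    by_contra hall
    push_neg at hall
    exact hW (MvPolynomial.funext fun x => by rw [hall x, map_zero])
  obtain ⟨α₀, hα₀⟩ := hex Gd hGd
  obtain ⟨β₀, hβ₀⟩ := hex Hd hHd
  have hdegG : ∀ α, MvPolynomial.eval α Gd ≠ 0 → 0 < (sig α G).natDegree := by
    intro α hα
    have hc := coeff_sig α G G.totalDegree
    have hne : (sig α G).coeff G.totalDegree ≠ 0 := by rw [hc, ← hGdd]; exact hα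
    exact lt_of_lt_of_le hG (Polynomial.le_natDegree_of_ne_zero hne)
  have hdegH : ∀ β, MvPolynomial.eval β Hd ≠ 0 → 0 < (sig β H).natDegree := by
    intro β hβ
    have hc := coeff_sig β H H.totalDegree
    have hne : (sig β H).coeff H.totalDegree ≠ 0 := by rw [hc, ← hHdd]; exact hβ
    exact lt_of_lt_of_le hH (Polynomial.le_natDegree_of_ne_zero hne)
  have huni : ∀ α β, MvPolynomial.eval α Gd ≠ 0 → MvPolynomial.eval β Hd ≠ 0 →
      ∃ R : Polynomial K, Polynomial.aeval (sig α G) R = sig α A ∧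
        Polynomial.aeval (sig β H) R = sig β B := by
    intro α β hα hβ
    refine uni_core _ _ _ _ (hdegG α hα) (hdegH β hβ) ?_
    have hd := map_dvd (Psi α β) hdvd
    rwa [map_sub, map_sub, Psi_inl, Psi_inl, Psi_inr, Psi_inr] at hd
  obtain ⟨R, hR1, hR2⟩ := huni α₀ β₀ hα₀ hβ₀
  have hAside : ∀ α, MvPolynomial.eval α Gd ≠ 0 → sig α (A - Polynomial.aeval G R) = 0 := by
    intro α hα
    obtain ⟨R', h1, h2⟩ := huni α β₀ hα hβ₀
    have hRR : R' = R := aeval_poly_inj (sig β₀ H) (hdegH β₀ hβ₀) (h2.trans hR2.symm)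
    rw [map_sub, ← Polynomial.aeval_algHom_apply, ← hRR, h1, sub_self]
  have hA : Polynomial.aeval G R = A :=
    (sub_eq_zero.mp (vanish Gd _ hGd hAside)).symm
  have hBside : ∀ β, MvPolynomial.eval β Hd ≠ 0 → sig β (B - Polynomial.aeval H R) = 0 := by
    intro β hβ
    obtain ⟨R', h1, h2⟩ := huni α₀ β hα₀ hβ
    have hRR : R' = R := aeval_poly_inj (sig α₀ G) (hdegG α₀ hα₀) (h1.trans hR1.symm)
    rw [map_sub, ← Polynomial.aeval_algHom_apply, ← hRR, h2, sub_self]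
  have hB : Polynomial.aeval H R = B :=
    (sub_eq_zero.mp (vanish Hd _ hHd hBside)).symm
  exact ⟨R, hA, hB⟩

theorem stmt_7 (K : Type*) [Field K] (m s : ℕ)
    (G A : MvPolynomial (Fin m) K) (H B : MvPolynomial (Fin s) K)
    (hG : 0 < G.totalDegree) (hH : 0 < H.totalDegree)
    (hdvd : (rename Sum.inl G - rename Sum.inr H : MvPolynomial (Fin m ⊕ Fin s) K) ∣
      rename Sum.inl A - rename Sum.inr B) :
    ∃ R : Polynomial K, Polynomial.aeval G R = A ∧ Polynomial.aeval H R = B := by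
  classical
  set K' := FractionRing (Polynomial K) with hK'
  letI : Infinite K' := Infinite.of_injective _ (IsFractionRing.injective (Polynomial K) _)
  set f : K →+* K' := algebraMap K K' with hf
  have hfinj : Function.Injective f := f.injective
  have htd : ∀ {k : ℕ} (P : MvPolynomial (Fin k) K),
      (MvPolynomial.map f P).totalDegree = P.totalDegree := by
    intro k P
    show (MvPolynomial.map f P).support.sup Finsupp.degree = P.support.sup Finsupp.degree
    rw [MvPolynomial.support_map_of_injective P hfinj]
  have hdvd' : (rename Sum.inl (MvPolynomial.map f G) - rename Sum.inr (MvPolynomial.map f H) :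
        MvPolynomial (Fin m ⊕ Fin s) K') ∣
      rename Sum.inl (MvPolynomial.map f A) - rename Sum.inr (MvPolynomial.map f B) := by
    have hd := map_dvd (MvPolynomial.map f :
      MvPolynomial (Fin m ⊕ Fin s) K →+* MvPolynomial (Fin m ⊕ Fin s) K') hdvd
    rwa [map_sub, map_sub, MvPolynomial.map_rename, MvPolynomial.map_rename,
      MvPolynomial.map_rename, MvPolynomial.map_rename] at hd
  obtain ⟨R', hA', hB'⟩ := main_infinite K' m s (MvPolynomial.map f G) (MvPolynomial.map f A)
    (MvPolynomial.map f H) (MvPolynomial.map f B) (by rw [htd]; exact hG)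
    (by rw [htd]; exact hH) hdvd'
  -- choose a K-linear projection of K' onto the image of K
  set V : Submodule K K' := LinearMap.range (Algebra.linearMap K K') with hV
  obtain ⟨Wc, hWc⟩ := Submodule.exists_isCompl V
  set π : K' →ₗ[K] K' := V.subtype.comp (V.projectionOnto Wc hWc) with hπ
  have hπ1 : ∀ x : K, π (algebraMap K K' x) = algebraMap K K' x := by
    intro x
    have hmem : algebraMap K K' x ∈ V := ⟨x, by rw [Algebra.linearMap_apply]⟩
    calc π (algebraMap K K' x)
        = ↑(V.projectionOnto Wc hWc ↑(⟨algebraMap K K' x, hmem⟩ : V)) := rfl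
      _ = algebraMap K K' x := by rw [Submodule.projectionOnto_apply_left]
  have hπr : ∀ x : K', ∃ k : K, π x = algebraMap K K' k := by
    intro x
    obtain ⟨k, hk⟩ := (V.projectionOnto Wc hWc x).2
    refine ⟨k, ?_⟩
    have h1 : π x = ↑(V.projectionOnto Wc hWc x) := rfl
    rw [h1, ← hk, Algebra.linearMap_apply]
  set t : ℕ → K := fun i => Classical.choose (hπr (R'.coeff i)) with hT
  have ht : ∀ i, π (R'.coeff i) = algebraMap K K' (t i) :=
    fun i => Classical.choose_spec (hπr (R'.coeff i))
  set R₀ : Polynomial K := ∑ i ∈ Finset.range (R'.natDegree + 1),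
    Polynomial.C (t i) * Polynomial.X ^ i with hR₀
  have key : ∀ {k : ℕ} (Gp Ap : MvPolynomial (Fin k) K),
      MvPolynomial.map f Ap = Polynomial.aeval (MvPolynomial.map f Gp) R' →
      Polynomial.aeval Gp R₀ = Ap := by
    intro k Gp Ap hEq
    apply MvPolynomial.map_injective f hfinj
    have e1 : Polynomial.aeval Gp R₀ = ∑ i ∈ Finset.range (R'.natDegree + 1),
        MvPolynomial.C (t i) * Gp ^ i := by
      rw [hR₀, map_sum]
      exact Finset.sum_congr rfl fun i _ => by
        rw [map_mul, map_pow, Polynomial.aeval_X, Polynomial.aeval_C,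
          MvPolynomial.algebraMap_eq]
    have expand0 : MvPolynomial.map f (Polynomial.aeval Gp R₀)
        = ∑ i ∈ Finset.range (R'.natDegree + 1),
          MvPolynomial.C (algebraMap K K' (t i)) * (MvPolynomial.map f Gp) ^ i := by
      rw [e1, map_sum]
      exact Finset.sum_congr rfl fun i _ => by
        rw [map_mul, MvPolynomial.map_C, map_pow]
    ext d
    have hc1 : ∀ i : ℕ, MvPolynomial.coeff d ((MvPolynomial.map f Gp) ^ i)
        = f (MvPolynomial.coeff d (Gp ^ i)) := by
      intro i
      rw [← map_pow, MvPolynomial.coeff_map]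
    have hcoeffEq := congrArg (MvPolynomial.coeff d) hEq
    rw [MvPolynomial.coeff_map, Polynomial.aeval_eq_sum_range,
      MvPolynomial.coeff_sum] at hcoeffEq
    simp only [MvPolynomial.coeff_smul, smul_eq_mul, hc1] at hcoeffEq
    have happly := congrArg π hcoeffEq
    rw [hπ1, map_sum] at happly
    have hterm : ∀ i ∈ Finset.range (R'.natDegree + 1),
        π (R'.coeff i * f (MvPolynomial.coeff d (Gp ^ i)))
          = algebraMap K K' (t i) * f (MvPolynomial.coeff d (Gp ^ i)) := by
      intro i _
      rw [mul_comm, ← Algebra.smul_def, map_smul, ht i, Algebra.smul_def, mul_comm]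
    rw [Finset.sum_congr rfl hterm] at happly
    rw [expand0, MvPolynomial.coeff_sum, MvPolynomial.coeff_map]
    simp only [MvPolynomial.coeff_C_mul, hc1]
    exact happly.symm
  exact ⟨R₀, key G A hA'.symm, key H B hB'.symm⟩
end

section
/- Let p be a prime and K a field of characteristic p. Define F ∈ K[X, Y, Z, W] by F = (X^{p+1} + Z^{p+1})^p·X + (X^p + X·Z^{p-1})^p·Z^{p+1} + Y^{p^2+p+1} + W^{p^2+p+1}. Then (∂F/∂X)·X^{p^3} + (∂F/∂Y)·Y^{p^3} + (∂F/∂Z)·Z^{p^3} + (∂F/∂W)·W^{p^3} = F^p as polynomials. In particular, F divides Σ partial-derivative-weighted p^3-powers, so the surface F = 0 is 𝔽_{p^3}-Frobenius nonclassical. -/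
/-!
In characteristic `p` a `p`-th power has zero partial derivatives, so every partial derivative of
`F` is a `p`-th power, and so is every `X i ^ p ^ 3`. Hence `∑ i, ∂ᵢF · X i ^ p ^ 3` is the `p`-th
power of a polynomial `G`, and `G = F` comes down, after one more use of additivity of the
Frobenius, to comparing four monomials in `X 0` and `X 2`.
-/

open MvPolynomial

namespace MvPolynomial

variable {σ R : Type*} [CommSemiring R] (p : ℕ) [CharP R p]

theorem pderiv_pow_char_mul (i : σ) (f g : MvPolynomial σ R) :
    pderiv i (f ^ p * g) = f ^ p * pderiv i g := by
  simp [Derivation.leibniz_pow]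

end MvPolynomial

/-- Both sides expand to `x^(p²+p+1) + x^(p²) z^(p+1) + x^p z^(p²+1) + x z^(p²+p)`. -/
theorem frobenius_twist_identity {R : Type*} [CommRing R] (p : ℕ) [Fact p.Prime] [CharP R p]
    (x z : R) :
    (x ^ (p + 1) + z ^ (p + 1)) * x ^ p ^ 2 + (x ^ p + x * z ^ (p - 1)) * z ^ (p ^ 2 + 1) =
      (x ^ (p + 1) + z ^ (p + 1)) ^ p * x + (x ^ p + x * z ^ (p - 1)) ^ p * z ^ (p + 1) := by
  rw [add_pow_char, add_pow_char]
  obtain ⟨n, rfl⟩ : ∃ n, p = n + 1 :=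
    ⟨p - 1, (Nat.sub_one_add_one (Fact.out : p.Prime).ne_zero).symm⟩
  simp only [Nat.add_sub_cancel]
  ring

theorem stmt_10 (p : ℕ) (hp : p.Prime) (K : Type*) [Field K] [CharP K p]
    (F : MvPolynomial (Fin 4) K)
    (hF : F = (X 0 ^ (p + 1) + X 2 ^ (p + 1)) ^ p * X 0 +
        (X 0 ^ p + X 0 * X 2 ^ (p - 1)) ^ p * X 2 ^ (p + 1) +
        X 1 ^ (p ^ 2 + p + 1) + X 3 ^ (p ^ 2 + p + 1)) :
    (∑ i : Fin 4, (pderiv i F) * X i ^ (p ^ 3)) = F ^ p ∧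
    F ∣ ∑ i : Fin 4, (pderiv i F) * X i ^ (p ^ 3) := by
  have := Fact.mk hp
  set a : MvPolynomial (Fin 4) K := X 0 ^ (p + 1) + X 2 ^ (p + 1) with ha
  set b : MvPolynomial (Fin 4) K := X 0 ^ p + X 0 * X 2 ^ (p - 1) with hb
  have hF_pow_mul : F = a ^ p * X 0 + b ^ p * (X 2 ^ p * X 2) + (X 1 ^ (p + 1)) ^ p * X 1 +
      (X 3 ^ (p + 1)) ^ p * X 3 := by
    rw [hF]; ring
  clear_value a b
  have hterm : ∀ i, pderiv i F * X i ^ p ^ 3 = ![a * X 0 ^ p ^ 2, X 1 ^ (p ^ 2 + p + 1),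
      b * X 2 ^ (p ^ 2 + 1), X 3 ^ (p ^ 2 + p + 1)] i ^ p := by
    intro i
    rw [hF_pow_mul]
    fin_cases i <;> simp only [map_add, pderiv_pow_char_mul, pderiv_X, Pi.single_apply] <;> simp <;>
      ring
  have hsum : ∑ i, pderiv i F * X i ^ p ^ 3 = F ^ p := by
    rw [Fintype.sum_congr _ _ hterm, ← sum_pow_char, Fin.sum_univ_four]
    simp only [Matrix.cons_val]
    rw [hF, ha, hb, ← frobenius_twist_identity]
    ring
  exact ⟨hsum, hsum ▸ dvd_pow_self F hp.ne_zero⟩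
end

section
/- Let q be a prime power. The number of pairs (x, y) ∈ 𝔽_{q^2} × 𝔽_{q^2} satisfying (x^q - x)·(y^q - y) = 1 is exactly q^2·(q - 1). -/
open Finset Polynomial

private lemma aux_frob {q : ℕ} (hq : IsPrimePow q)
    {K : Type*} [Field K] [Fintype K] (hK : Fintype.card K = q ^ 2) :
    ∀ a b : K, (a + b) ^ q = a ^ q + b ^ q := by
  obtain ⟨p, k, hp, hk, rfl⟩ := hq
  have hpp : Nat.Prime p := hp.nat_prime
  haveI : Fact p.Prime := ⟨hpp⟩
  obtain ⟨r, hc⟩ := CharP.exists K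
  haveI := hc
  obtain ⟨n, hrp, hcardr⟩ := FiniteField.card K r
  have hdvd : p ∣ r := by
    have h1 : p ∣ r ^ (n : ℕ) := by
      rw [← hcardr, hK, ← pow_mul]
      exact dvd_pow_self p (by positivity)
    exact hpp.dvd_of_dvd_pow h1
  have : r = p := ((Nat.prime_dvd_prime_iff_eq hpp hrp).mp hdvd).symm
  subst this
  exact fun a b => add_pow_char_pow a b r k

private lemma aux_sub {q : ℕ} (hq : IsPrimePow q)
    {K : Type*} [Field K] [Fintype K] (hK : Fintype.card K = q ^ 2) :
    ∀ a b : K, (a - b) ^ q = a ^ q - b ^ q := by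
  intro a b
  have h := aux_frob hq hK (a - b) b
  rw [sub_add_cancel] at h
  linear_combination -h

private lemma aux_ker {q : ℕ} (hq : IsPrimePow q)
    {K : Type*} [Field K] [Fintype K] [DecidableEq K] (hK : Fintype.card K = q ^ 2) :
    #(univ.filter fun t : K => t ^ q - t = 0) = q := by
  classical
  have h2 : 2 ≤ q := hq.two_le
  have hsq : q ^ 2 - 1 = (q + 1) * (q - 1) := by
    apply Nat.sub_eq_of_eq_add
    obtain ⟨m, rfl⟩ : ∃ m, q = m + 1 := ⟨q - 1, by omega⟩
    simp only [Nat.add_sub_cancel]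
    ring
  have hcardu : Fintype.card Kˣ = q ^ 2 - 1 := by rw [Fintype.card_units, hK]
  obtain ⟨g, hg⟩ := IsCyclic.exists_ofOrder_eq_natCard (α := Kˣ)
  rw [Nat.card_eq_fintype_card, hcardu] at hg
  have hha : orderOf (g ^ (q + 1)) = q - 1 := by
    rw [orderOf_pow, hg, hsq, Nat.gcd_eq_right (dvd_mul_right _ _),
      Nat.mul_div_cancel_left _ (by omega : 0 < q + 1)]
  -- units filter card
  have hle : #(univ.filter fun u : Kˣ => u ^ (q - 1) = 1) ≤ q - 1 :=
    IsCyclic.card_pow_eq_one_le (by omega)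
  have hge : q - 1 ≤ #(univ.filter fun u : Kˣ => u ^ (q - 1) = 1) := by
    have hsub : (Subgroup.zpowers (g ^ (q + 1)) : Set Kˣ).toFinset ⊆
        univ.filter fun u : Kˣ => u ^ (q - 1) = 1 := by
      intro u hu
      rw [Set.mem_toFinset] at hu
      simp only [mem_filter, mem_univ, true_and]
      exact orderOf_dvd_iff_pow_eq_one.mp (hha ▸ orderOf_dvd_of_mem_zpowers hu)
    calc q - 1 = (Subgroup.zpowers (g ^ (q + 1)) : Set Kˣ).toFinset.card := by
          rw [Set.toFinset_card, ← Nat.card_eq_fintype_card, ← hha]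
          exact (Nat.card_zpowers _).symm
      _ ≤ _ := Finset.card_le_card hsub
  have hucard : #(univ.filter fun u : Kˣ => u ^ (q - 1) = 1) = q - 1 := le_antisymm hle hge
  have key : (univ.filter fun t : K => t ^ q - t = 0) =
      insert (0 : K) ((univ.filter fun u : Kˣ => u ^ (q - 1) = 1).image Units.val) := by
    ext t
    simp only [mem_filter, mem_univ, true_and, mem_insert, mem_image, sub_eq_zero]
    constructor
    · intro ht
      rcases eq_or_ne t 0 with h | h
      · exact Or.inl h
      · refine Or.inr ⟨Units.mk0 t h, ?_, rfl⟩
        ext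
        rw [Units.val_pow_eq_pow_val, Units.val_one, Units.val_mk0]
        have : t ^ (q - 1) * t = 1 * t := by
          rw [one_mul, ← pow_succ]
          have : q - 1 + 1 = q := by omega
          rw [this, ht]
        exact mul_right_cancel₀ h this
    · rintro (rfl | ⟨u, hu, rfl⟩)
      · rw [zero_pow (by omega)]
      · have : ((u : K)) ^ (q - 1) = 1 := by
          rw [← Units.val_pow_eq_pow_val, hu, Units.val_one]
        calc (u : K) ^ q = (u : K) ^ (q - 1) * (u : K) := by
              rw [← pow_succ]; congr 1; omega
          _ = (u : K) := by rw [this, one_mul]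
  have h0 : (0 : K) ∉ (univ.filter fun u : Kˣ => u ^ (q - 1) = 1).image Units.val := by
    simp only [mem_image, not_exists]
    intro u
    simp only [not_and]
    intro _ hval
    exact u.ne_zero hval
  rw [key, card_insert_of_notMem h0, card_image_of_injective _ Units.val_injective, hucard]
  omega

private lemma aux_fiber {q : ℕ} (hq : IsPrimePow q)
    {K : Type*} [Field K] [Fintype K] [DecidableEq K] (hK : Fintype.card K = q ^ 2)
    (c : K) (t₀ : K) (ht₀ : t₀ ^ q - t₀ = c) :
    #(univ.filter fun y : K => y ^ q - y = c) = q := by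
  have hbij : #(univ.filter fun y : K => y ^ q - y = c) =
      #(univ.filter fun t : K => t ^ q - t = 0) := by
    apply Finset.card_nbij' (fun y => y - t₀) (fun z => z + t₀)
    · intro y hy
      simp only [mem_coe, mem_filter, mem_univ, true_and] at hy ⊢
      have h := aux_sub hq hK y t₀
      linear_combination h + hy - ht₀
    · intro z hz
      simp only [mem_coe, mem_filter, mem_univ, true_and] at hz ⊢
      have h := aux_frob hq hK z t₀
      linear_combination h + hz + ht₀
    · intro y _; ring
    · intro z _; ring
  rw [hbij]
  exact aux_ker hq hK

private lemma aux_surj {q : ℕ} (hq : IsPrimePow q)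
    {K : Type*} [Field K] [Fintype K] [DecidableEq K] (hK : Fintype.card K = q ^ 2)
    (u : K) (hu : u ^ q = -u) : ∃ t : K, t ^ q - t = u := by
  classical
  have h2 : 2 ≤ q := hq.two_le
  set img := univ.image (fun t : K => t ^ q - t) with himg
  have hfib : ∀ c ∈ img, #(univ.filter fun t : K => t ^ q - t = c) = q := by
    intro c hc
    rw [himg, mem_image] at hc
    obtain ⟨t₀, _, ht₀⟩ := hc
    exact aux_fiber hq hK c t₀ ht₀
  have hcount : #img * q = q ^ 2 := by
    have h := Finset.card_eq_sum_card_fiberwise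
      (f := fun t : K => t ^ q - t) (s := univ) (t := img)
      (fun x _ => mem_image_of_mem _ (mem_univ x))
    rw [card_univ, hK, Finset.sum_congr rfl hfib, Finset.sum_const, smul_eq_mul] at h
    exact h.symm
  -- the Z set
  have hpow2 : ∀ a : K, a ^ q ^ 2 = a := fun a => hK ▸ FiniteField.pow_card a
  have himgZ : ∀ v ∈ img, v ^ q = -v := by
    intro v hv
    rw [himg, mem_image] at hv
    obtain ⟨t, _, rfl⟩ := hv
    have h1 := aux_sub hq hK (t ^ q) t
    have h2 : (t ^ q) ^ q = t := by rw [← pow_mul, ← sq, hpow2]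
    linear_combination h1 + h2
  have hZle : #(univ.filter fun v : K => v ^ q = -v) ≤ q := by
    have hPne : (X ^ q + X : K[X]) ≠ 0 := by
      intro h
      have hc := congrArg (fun P : K[X] => P.coeff 1) h
      simp only [coeff_add, coeff_X_pow, coeff_X_one, coeff_zero] at hc
      rw [if_neg (by omega : ¬ 1 = q)] at hc
      simp at hc
    have hsubset : (univ.filter fun v : K => v ^ q = -v) ⊆ (X ^ q + X : K[X]).roots.toFinset := by
      intro v hv
      rw [mem_filter] at hv
      rw [Multiset.mem_toFinset, mem_roots hPne]
      simp only [IsRoot, eval_add, eval_pow, eval_X]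
      rw [hv.2]; ring
    calc #(univ.filter fun v : K => v ^ q = -v) ≤ (X ^ q + X : K[X]).roots.toFinset.card :=
          Finset.card_le_card hsubset
      _ ≤ Multiset.card (X ^ q + X : K[X]).roots := Multiset.toFinset_card_le _
      _ ≤ (X ^ q + X : K[X]).natDegree := card_roots' _
      _ ≤ q := by
          refine le_trans (natDegree_add_le _ _) ?_
          simp [natDegree_X_pow]
          omega
  have himgsub : img ⊆ univ.filter fun v : K => v ^ q = -v := by
    intro v hv
    rw [mem_filter]
    exact ⟨mem_univ v, himgZ v hv⟩
  have himgcard : #img = q := by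
    have hq0 : 0 < q := by omega
    have : #img * q = q * q := by rw [hcount, sq]
    exact Nat.eq_of_mul_eq_mul_right hq0 this
  have heq : img = univ.filter fun v : K => v ^ q = -v :=
    Finset.eq_of_subset_of_card_le himgsub (by rw [himgcard]; exact hZle)
  have humem : u ∈ img := by
    rw [heq, mem_filter]; exact ⟨mem_univ u, hu⟩
  rw [himg, mem_image] at humem
  obtain ⟨t, _, ht⟩ := humem
  exact ⟨t, ht⟩

theorem stmt_11 (q : ℕ) (hq : IsPrimePow q)
    (K : Type*) [Field K] [Fintype K] (hK : Fintype.card K = q ^ 2) :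
    Nat.card {xy : K × K // (xy.1 ^ q - xy.1) * (xy.2 ^ q - xy.2) = 1} =
      q ^ 2 * (q - 1) := by
  classical
  have h2 : 2 ≤ q := hq.two_le
  rw [Nat.card_eq_fintype_card]
  rw [Fintype.card_congr (Equiv.subtypeProdEquivSigmaSubtype
    (fun x y : K => (x ^ q - x) * (y ^ q - y) = 1))]
  rw [Fintype.card_sigma]
  have hpow2 : ∀ a : K, a ^ q ^ 2 = a := fun a => hK ▸ FiniteField.pow_card a
  have hterm : ∀ x : K, Fintype.card {y : K // (x ^ q - x) * (y ^ q - y) = 1} =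
      if x ^ q - x = 0 then 0 else q := by
    intro x
    split_ifs with h0
    · rw [Fintype.card_eq_zero_iff]
      refine ⟨fun y => ?_⟩
      have hy := y.2
      exact zero_ne_one (α := K) (by linear_combination hy - ((y : K) ^ q - (y : K)) * h0)
    · have hv : (x ^ q - x) ^ q = -(x ^ q - x) := by
        have h1 := aux_sub hq hK (x ^ q) x
        have hxx : (x ^ q) ^ q = x := by rw [← pow_mul, ← sq, hpow2]
        linear_combination h1 + hxx
      have hu : ((x ^ q - x)⁻¹) ^ q = -(x ^ q - x)⁻¹ := by
        rw [inv_pow, hv, inv_neg]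
      obtain ⟨t₀, ht₀⟩ := aux_surj hq hK _ hu
      rw [Fintype.card_subtype]
      have hset : (univ.filter fun y : K => (x ^ q - x) * (y ^ q - y) = 1) =
          univ.filter fun y : K => y ^ q - y = (x ^ q - x)⁻¹ := by
        ext y
        simp only [mem_filter, mem_univ, true_and]
        constructor
        · intro h
          exact eq_inv_of_mul_eq_one_left (by linear_combination h)
        · intro h
          rw [h, mul_inv_cancel₀ h0]
      rw [hset]
      exact aux_fiber hq hK _ t₀ ht₀
  simp only [hterm]
  rw [Finset.sum_ite, Finset.sum_const_zero, Finset.sum_const, smul_eq_mul, zero_add]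
  have hcards := Finset.card_filter_add_card_filter_not
    (s := (univ : Finset K)) (p := fun x : K => x ^ q - x = 0)
  rw [card_univ, hK, aux_ker hq hK] at hcards
  have hne : #(univ.filter fun x : K => ¬ (x ^ q - x = 0)) = q ^ 2 - q := by omega
  rw [hne]
  obtain ⟨m, rfl⟩ : ∃ m, q = m + 1 := ⟨q - 1, by omega⟩
  have e : (m + 1) ^ 2 - (m + 1) = m * (m + 1) := Nat.sub_eq_of_eq_add (by ring)
  rw [e]
  simp only [Nat.add_sub_cancel]
  ring
end
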